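/- For every θ ∈ ℝ, the Yeo–Johnson transformation satisfies lim_{t→+∞} Λ_θ(t) = +∞ and lim_{t→−∞} Λ_θ(t) = −∞ if and only if 0 ≤ θ ≤ 2; in particular, for θ ∈ [0,2] the map Λ_θ : ℝ → ℝ is a bijection. -/

import Mathlib

open Filter Real Set

/-- The Yeo–Johnson transformation. -/
noncomputable def YJ (θ t : ℝ) : ℝ :=
  if 0 ≤ t then
    if θ = 0 then Real.log (t + 1) else ((t + 1) ^ θ - 1) / θ
  else
    if θ = 2 then -Real.log (-t + 1) else -(((-t + 1) ^ (2 - θ) - 1) / (2 - θ))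

/-!
For `t ≥ 0`, `Λ_θ(t)` is the Box–Cox transform `B_θ(x) = (x^θ - 1)/θ` (`B_0 = log`) at `x = t + 1`,
and the two branches are related by the symmetry `Λ_θ(-t) = -Λ_{2-θ}(t)`. Each `B_θ` is continuous
and strictly increasing on `(0, ∞)` with `B_θ(1) = 0`, and it is unbounded above iff `θ ≥ 0` (for
`θ < 0` it increases to `-1/θ`). So `Λ_θ` is a continuous strictly increasing map of `ℝ`, tending
to `∞` at `∞` iff `θ ≥ 0` and, by the symmetry, to `-∞` at `-∞` iff `θ ≤ 2`; the intermediate value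
theorem then gives surjectivity.
-/

noncomputable def boxCox (θ x : ℝ) : ℝ :=
  if θ = 0 then log x else (x ^ θ - 1) / θ

lemma boxCox_one (θ : ℝ) : boxCox θ 1 = 0 := by
  simp [boxCox]

lemma boxCox_strictMonoOn (θ : ℝ) : StrictMonoOn (boxCox θ) (Ioi 0) := by
  intro x hx y _ hxy
  unfold boxCox
  split_ifs with hθ
  · exact log_lt_log hx hxy
  rcases lt_or_gt_of_ne hθ with hneg | hpos
  · exact div_lt_div_of_neg_of_lt hneg (by linarith [rpow_lt_rpow_of_neg hx hxy hneg])
  · exact div_lt_div_of_pos_right (by linarith [rpow_lt_rpow (le_of_lt hx) hxy hpos]) hpos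

lemma boxCox_continuousOn (θ : ℝ) : ContinuousOn (boxCox θ) (Ioi 0) := by
  unfold boxCox
  split_ifs
  · exact continuousOn_log.mono fun x hx => ne_of_gt hx
  · exact ((continuousOn_id.rpow_const fun x hx => Or.inl (ne_of_gt hx)).sub
      continuousOn_const).div_const θ

lemma tendsto_boxCox_atTop_iff (θ : ℝ) : Tendsto (boxCox θ) atTop atTop ↔ 0 ≤ θ := by
  unfold boxCox
  rcases lt_trichotomy θ 0 with hneg | rfl | hpos
  · have hlim : Tendsto (fun x : ℝ => (x ^ θ - 1) / θ) atTop (nhds ((0 - 1) / θ)) := by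
      have hpow := tendsto_rpow_neg_atTop (neg_pos.mpr hneg)
      rw [neg_neg] at hpow
      exact (hpow.sub_const 1).div_const θ
    simp only [hneg.ne, if_false, not_le.mpr hneg, iff_false]
    exact not_tendsto_atTop_of_tendsto_nhds hlim
  · simpa using tendsto_log_atTop
  · simp only [hpos.ne', if_false, hpos.le, iff_true]
    exact (tendsto_atTop_add_const_right _ (-1) (tendsto_rpow_atTop hpos)).atTop_div_const hpos

lemma yj_of_nonneg (θ : ℝ) {t : ℝ} (ht : 0 ≤ t) : YJ θ t = boxCox θ (t + 1) :=
  if_pos ht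

lemma yj_of_nonpos (θ : ℝ) {t : ℝ} (ht : t ≤ 0) : YJ θ t = -boxCox (2 - θ) (-t + 1) := by
  rcases ht.lt_or_eq with ht | rfl
  · simp only [YJ, boxCox, not_le.mpr ht, if_false, sub_eq_zero, eq_comm (a := (2 : ℝ))]
    split_ifs <;> rfl
  · simp [yj_of_nonneg, boxCox_one]

lemma yj_neg (θ t : ℝ) : YJ θ (-t) = -YJ (2 - θ) t := by
  rcases le_total 0 t with ht | ht
  · rw [yj_of_nonpos θ (neg_nonpos.mpr ht), yj_of_nonneg _ ht, neg_neg]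
  · rw [yj_of_nonneg θ (neg_nonneg.mpr ht), yj_of_nonpos _ ht, sub_sub_cancel, neg_neg]

lemma yj_eq_neg_yj_neg (θ t : ℝ) : YJ θ t = -YJ (2 - θ) (-t) := by
  rw [yj_neg, sub_sub_cancel, neg_neg]

lemma yj_strictMonoOn_Ici (θ : ℝ) : StrictMonoOn (YJ θ) (Ici 0) := by
  intro s (hs : 0 ≤ s) t (ht : 0 ≤ t) hst
  rw [yj_of_nonneg θ hs, yj_of_nonneg θ ht]
  exact boxCox_strictMonoOn θ (show (0 : ℝ) < s + 1 by linarith)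
    (show (0 : ℝ) < t + 1 by linarith) (by linarith)

lemma yj_continuousOn_Ici (θ : ℝ) : ContinuousOn (YJ θ) (Ici 0) := by
  refine ContinuousOn.congr ?_ fun t ht => yj_of_nonneg θ ht
  exact (boxCox_continuousOn θ).comp (by fun_prop)
    fun t (ht : 0 ≤ t) => show (0 : ℝ) < t + 1 by linarith

lemma yj_strictMono (θ : ℝ) : StrictMono (YJ θ) := by
  refine StrictMonoOn.Iic_union_Ici (a := 0) (fun s (hs : s ≤ 0) t (ht : t ≤ 0) hst => ?_)
    (yj_strictMonoOn_Ici θ)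
  rw [yj_eq_neg_yj_neg θ s, yj_eq_neg_yj_neg θ t, neg_lt_neg_iff]
  exact yj_strictMonoOn_Ici _ (neg_nonneg.mpr ht :) (neg_nonneg.mpr hs :) (neg_lt_neg hst)

lemma yj_continuous (θ : ℝ) : Continuous (YJ θ) := by
  rw [← continuousOn_univ, ← Iic_union_Ici (a := (0 : ℝ))]
  refine ContinuousOn.union_of_isClosed ?_ (yj_continuousOn_Ici θ) isClosed_Iic isClosed_Ici
  refine ContinuousOn.congr ?_ fun t _ => yj_eq_neg_yj_neg θ t
  exact ((yj_continuousOn_Ici (2 - θ)).comp continuousOn_neg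
    fun t (ht : t ≤ 0) => neg_nonneg.mpr ht).neg

lemma tendsto_yj_atTop_iff (θ : ℝ) : Tendsto (YJ θ) atTop atTop ↔ 0 ≤ θ := by
  have hYJ : YJ θ =ᶠ[atTop] fun t => boxCox θ (t + 1) :=
    eventually_atTop.mpr ⟨0, fun t ht => yj_of_nonneg θ ht⟩
  rw [tendsto_congr' hYJ, ← Function.comp_def, ← tendsto_map'_iff, map_add_atTop_eq,
    tendsto_boxCox_atTop_iff]

lemma tendsto_yj_atBot_iff (θ : ℝ) : Tendsto (YJ θ) atBot atBot ↔ θ ≤ 2 := by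
  rw [funext (yj_eq_neg_yj_neg θ), tendsto_neg_atBot_iff, tendsto_comp_neg_atBot_iff, tendsto_yj_atTop_iff, sub_nonneg]

/-- `Λ_θ` tends to `±∞` at `±∞` if and only if `0 ≤ θ ≤ 2`; in particular for
`θ ∈ [0,2]` it is a bijection of ℝ. -/
theorem yj_tendsto_iff_and_bijective (θ : ℝ) :
    ((Filter.Tendsto (YJ θ) Filter.atTop Filter.atTop ∧
      Filter.Tendsto (YJ θ) Filter.atBot Filter.atBot) ↔ (0 ≤ θ ∧ θ ≤ 2)) ∧
    (0 ≤ θ → θ ≤ 2 → Function.Bijective (YJ θ)) := by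
  refine ⟨by rw [tendsto_yj_atTop_iff, tendsto_yj_atBot_iff], fun h0 h2 => ?_⟩
  exact ⟨(yj_strictMono θ).injective, (yj_continuous θ).surjective
    ((tendsto_yj_atTop_iff θ).mpr h0) ((tendsto_yj_atBot_iff θ).mpr h2)⟩
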